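/- arXiv:math/0403336 — 5 statements merged into one kernel-verified Lean document; each statement's English description precedes it below -/
import Mathlib

section
/- Let ξ be an attracting fixed point of a holomorphic map N defined on an open set, with an open disk S₀ around ξ satisfying N(closure S₀) ⊆ S₀. Define inductively S_{k+1} to be the connected component of N⁻¹(S_k) containing S₀. Then the immediate basin U of ξ (the connected component containing ξ of the set of points whose orbits converge to ξ) equals the union of the S_k over k ∈ ℕ. -/
open Filter Metric Set

/-- Exhaustion of the immediate basin: if `ξ` is an attracting fixed point of a
holomorphic map `N` (holomorphic on an open set containing the basin), `S 0` is an
open disk around `ξ` with `N (closure (S 0)) ⊆ S 0` and `closure (S 0)` contained in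
the immediate basin `U`, and `S (k+1)` is the connected component of `N ⁻¹' (S k)`
containing `S 0` (equivalently, containing `ξ`), then `U = ⋃ k, S k`. -/
theorem immediate_basin_eq_iUnion
    (N : ℂ → ℂ) (ξ : ℂ) (hfix : N ξ = ξ) (hattr : ‖deriv N ξ‖ < 1)
    (Ω : Set ℂ) (hΩ : IsOpen Ω) (hNΩ : DifferentiableOn ℂ N Ω)
    (U : Set ℂ)
    (hU : U = connectedComponentIn {z | Tendsto (fun n => N^[n] z) atTop (nhds ξ)} ξ)
    (hUΩ : U ⊆ Ω)
    (r : ℝ) (hr : 0 < r)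
    (S : ℕ → Set ℂ)
    (hS0 : S 0 = Metric.ball ξ r)
    (himg : N '' closure (S 0) ⊆ S 0)
    (hsub : closure (S 0) ⊆ U)
    (hSk : ∀ k, S (k + 1) = connectedComponentIn (N ⁻¹' (S k)) ξ) :
    U = ⋃ k, S k := by
  set B : Set ℂ := {z | Tendsto (fun n => N^[n] z) atTop (nhds ξ)} with hB
  have hξB : ξ ∈ B := by
    have h1 : ∀ n, N^[n] ξ = ξ := fun n => Function.iterate_fixed hfix n
    show Tendsto _ _ _
    simpa [h1] using (tendsto_const_nhds : Tendsto (fun _ : ℕ => ξ) atTop (nhds ξ))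
  have hpush : ∀ z, z ∈ B → N z ∈ B := by
    intro z hz
    have h1 : Tendsto (fun n => N^[n+1] z) atTop (nhds ξ) :=
      (tendsto_add_atTop_iff_nat 1).mpr hz
    show Tendsto _ _ _
    simpa [Function.iterate_succ_apply] using h1
  have hpull : ∀ z, N z ∈ B → z ∈ B := by
    intro z hz
    have h1 : Tendsto (fun n => N^[n] (N z)) atTop (nhds ξ) := hz
    have h2 : Tendsto (fun n => N^[n+1] z) atTop (nhds ξ) := by
      simpa [Function.iterate_succ_apply] using h1
    exact (tendsto_add_atTop_iff_nat 1).mp h2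
  have hpulln : ∀ n z, N^[n] z ∈ B → z ∈ B := by
    intro n
    induction n with
    | zero => intro z hz; simpa using hz
    | succ n ih =>
      intro z hz
      rw [Function.iterate_succ_apply] at hz
      exact hpull z (ih (N z) hz)
  have hUB : U ⊆ B := hU ▸ connectedComponentIn_subset _ _
  have hξU : ξ ∈ U := hU ▸ mem_connectedComponentIn hξB
  have hUpc : IsPreconnected U := hU ▸ isPreconnected_connectedComponentIn
  have hcontN : ∀ z ∈ Ω, ContinuousAt N z := fun z hz =>
    hNΩ.continuousOn.continuousAt (hΩ.mem_nhds hz)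
  -- basic properties of S k
  have hSprop : ∀ k, ξ ∈ S k ∧ IsPreconnected (S k) ∧ S k ⊆ U := by
    intro k
    induction k with
    | zero =>
      rw [hS0]
      exact ⟨mem_ball_self hr, (convex_ball ξ r).isPreconnected,
        fun z hz => hsub (subset_closure (by rwa [hS0]))⟩
    | succ k ih =>
      obtain ⟨hξk, hconn, hkU⟩ := ih
      have hξpre : ξ ∈ N ⁻¹' (S k) := by simp [hfix, hξk]
      have h1 : ξ ∈ S (k+1) := (hSk k) ▸ mem_connectedComponentIn hξpre
      have h2 : IsPreconnected (S (k+1)) := (hSk k) ▸ isPreconnected_connectedComponentIn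
      have h3 : S (k+1) ⊆ B := by
        intro z hz
        have hz' : z ∈ N ⁻¹' (S k) := connectedComponentIn_subset _ _ (hSk k ▸ hz)
        exact hpull z (hUB (hkU hz'))
      exact ⟨h1, h2, hU ▸ h2.subset_connectedComponentIn h1 h3⟩
  have hmono1 : ∀ k, S k ⊆ S (k+1) := by
    intro k
    induction k with
    | zero =>
      have hsubpre : S 0 ⊆ N ⁻¹' (S 0) := fun z hz => himg ⟨z, subset_closure hz, rfl⟩
      rw [hSk 0]
      exact (hSprop 0).2.1.subset_connectedComponentIn (hSprop 0).1 hsubpre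
    | succ k ih =>
      have hsubpre : S (k+1) ⊆ N ⁻¹' (S (k+1)) := by
        intro z hz
        rw [hSk k] at hz
        have hz2 : z ∈ N ⁻¹' (S k) := connectedComponentIn_subset _ _ hz
        exact ih hz2
      rw [hSk (k+1)]
      exact (hSprop (k+1)).2.1.subset_connectedComponentIn (hSprop (k+1)).1 hsubpre
  have hmono : Monotone S := monotone_nat_of_le_succ hmono1
  -- N maps U into U
  have hNU : ∀ z ∈ U, N z ∈ U := by
    have himgU : IsPreconnected (N '' U) := hUpc.image N (hNΩ.continuousOn.mono hUΩ)
    have hsubB : N '' U ⊆ B := by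
      rintro w ⟨z, hz, rfl⟩
      exact hpush z (hUB hz)
    have hξmem : ξ ∈ N '' U := ⟨ξ, hξU, hfix⟩
    have hh : N '' U ⊆ U := hU ▸ himgU.subset_connectedComponentIn hξmem hsubB
    exact fun z hz => hh ⟨z, hz, rfl⟩
  have horbit : ∀ n, ∀ z ∈ U, N^[n] z ∈ U := by
    intro n
    induction n with
    | zero => intro z hz; simpa using hz
    | succ n ih =>
      intro z hz
      rw [Function.iterate_succ_apply']
      exact hNU _ (ih z hz)
  have hcontIter : ∀ n, ∀ z ∈ U, ContinuousAt (N^[n]) z := by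
    intro n
    induction n with
    | zero => intro z _; simpa using (continuousAt_id : ContinuousAt id z)
    | succ n ih =>
      intro z hz
      have h1 : ContinuousAt (N ∘ N^[n]) z :=
        (hcontN _ (hUΩ (horbit n z hz))).comp (ih z hz)
      rw [Function.iterate_succ']
      exact h1
  -- U is open
  have hS0nhds : S 0 ∈ nhds ξ := by rw [hS0]; exact ball_mem_nhds _ hr
  have hUopen : IsOpen U := by
    rw [isOpen_iff_mem_nhds]
    intro z hz
    have hev : ∀ᶠ n in atTop, N^[n] z ∈ S 0 := (hUB hz) hS0nhds
    obtain ⟨n, hn⟩ := hev.exists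
    obtain ⟨ε, hε, hball⟩ := Metric.mem_nhds_iff.mp
      ((hcontIter n z hz).preimage_mem_nhds
        ((show IsOpen (S 0) by rw [hS0]; exact isOpen_ball).mem_nhds hn))
    have hballB : ball z ε ⊆ B := fun w hw =>
      hpulln n w (hUB ((hSprop 0).2.2 (hball hw)))
    have hbU : ball z ε ⊆ U := by
      rw [hU]
      have h1 : ball z ε ⊆ connectedComponentIn B z :=
        (convex_ball z ε).isPreconnected.subset_connectedComponentIn (mem_ball_self hε) hballB
      rwa [← connectedComponentIn_eq (show z ∈ connectedComponentIn B ξ from hU ▸ hz)] at h1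
    exact Filter.mem_of_superset (ball_mem_nhds z hε) hbU
  -- each S k is open
  have hSopen : ∀ k, IsOpen (S k) := by
    intro k
    induction k with
    | zero => rw [hS0]; exact isOpen_ball
    | succ k ih =>
      have hopen : IsOpen (U ∩ N ⁻¹' (S k)) := by
        rw [isOpen_iff_mem_nhds]
        rintro w ⟨hwU, hwpre⟩
        exact Filter.inter_mem (hUopen.mem_nhds hwU)
          ((hcontN w (hUΩ hwU)).preimage_mem_nhds (ih.mem_nhds hwpre))
      have heq : S (k+1) = connectedComponentIn (U ∩ N ⁻¹' (S k)) ξ := by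
        apply subset_antisymm
        · exact (hSprop (k+1)).2.1.subset_connectedComponentIn (hSprop (k+1)).1
            (fun z hz => ⟨(hSprop (k+1)).2.2 hz, connectedComponentIn_subset _ _ (hSk k ▸ hz)⟩)
        · rw [hSk k]
          exact connectedComponentIn_mono ξ inter_subset_right
      rw [heq]
      exact hopen.connectedComponentIn
  -- key absorption lemma
  have hkey : ∀ n (V : Set ℂ), V ⊆ U → IsPreconnected V → (N^[n]) '' V ⊆ S 0 →
      ∀ m, (V ∩ S m).Nonempty → V ⊆ S (n + m) := by
    intro n
    induction n with
    | zero =>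
      rintro V hVU hVc h0 m ⟨w, hwV, hwm⟩
      have hV0 : V ⊆ S 0 := by simpa using h0
      rw [Nat.zero_add]
      exact hV0.trans (hmono (Nat.zero_le m))
    | succ n ih =>
      rintro V hVU hVc hV0 m ⟨w, hwV, hwm⟩
      have hV'U : N '' V ⊆ U := by
        rintro x ⟨v, hv, rfl⟩
        exact hNU v (hVU hv)
      have hV'c : IsPreconnected (N '' V) :=
        hVc.image N ((hNΩ.continuousOn.mono hUΩ).mono hVU)
      have hV'0 : (N^[n]) '' (N '' V) ⊆ S 0 := by
        rw [← Set.image_comp, ← Function.iterate_succ]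
        exact hV0
      have hNw : N w ∈ S m := by
        cases m with
        | zero =>
          exact himg ⟨w, subset_closure hwm, rfl⟩
        | succ j =>
          have hw' : w ∈ N ⁻¹' (S j) := connectedComponentIn_subset _ _ (hSk j ▸ hwm)
          exact hmono (Nat.le_succ j) hw'
      have hiret : N '' V ⊆ S (n + m) :=
        ih (N '' V) hV'U hV'c hV'0 m ⟨N w, ⟨w, hwV, rfl⟩, hNw⟩
      have hVpre : V ⊆ N ⁻¹' (S (n + m)) := fun z hz => hiret ⟨z, hz, rfl⟩
      have hwS : w ∈ S (n + m + 1) := hmono (by omega) hwm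
      have hunion : IsPreconnected (V ∪ S (n+m+1)) :=
        hVc.union w hwV hwS (hSprop (n+m+1)).2.1
      have hsubpre : V ∪ S (n+m+1) ⊆ N ⁻¹' (S (n+m)) :=
        union_subset hVpre (by rw [hSk (n+m)]; exact connectedComponentIn_subset _ _)
      have hfin : V ∪ S (n+m+1) ⊆ connectedComponentIn (N ⁻¹' (S (n+m))) ξ :=
        hunion.subset_connectedComponentIn (Or.inr (hSprop (n+m+1)).1) hsubpre
      have : V ⊆ S (n+m+1) := by
        rw [hSk (n+m)]
        exact subset_union_left.trans hfin
      rwa [show n+1+m = n+m+1 by omega]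
  -- conclusion
  apply subset_antisymm
  · set u := ⋃ k, S k with hu
    have huopen : IsOpen u := isOpen_iUnion hSopen
    have hcl : ∀ z ∈ U, z ∈ closure u → z ∈ u := by
      intro z hzU hzcl
      have hev : ∀ᶠ n in atTop, N^[n] z ∈ S 0 := (hUB hzU) hS0nhds
      obtain ⟨n, hn⟩ := hev.exists
      obtain ⟨ε, hε, hball⟩ := Metric.mem_nhds_iff.mp
        (Filter.inter_mem
          ((hcontIter n z hzU).preimage_mem_nhds ((hSopen 0).mem_nhds hn))
          (hUopen.mem_nhds hzU))
      obtain ⟨w, hwb, hwu⟩ := _root_.mem_closure_iff.mp hzcl (ball z ε) isOpen_ball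
        (mem_ball_self hε)
      obtain ⟨m, hwm⟩ := mem_iUnion.mp hwu
      have hVS : ball z ε ⊆ S (n + m) :=
        hkey n (ball z ε) (fun x hx => (hball hx).2) (convex_ball z ε).isPreconnected
          (image_subset_iff.mpr fun x hx => (hball hx).1) m ⟨w, hwb, hwm⟩
      exact mem_iUnion.mpr ⟨n+m, hVS (mem_ball_self hε)⟩
    have hdisj : Disjoint u (closure u)ᶜ :=
      disjoint_compl_right.mono_right (compl_subset_compl.mpr subset_closure)
    have hsub2 : U ⊆ u ∪ (closure u)ᶜ := by
      intro z hz
      by_cases h : z ∈ closure u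
      · exact Or.inl (hcl z hz h)
      · exact Or.inr h
    exact hUpc.subset_left_of_subset_union huopen isClosed_closure.isOpen_compl hdisj hsub2
      ⟨ξ, hξU, mem_iUnion.mpr ⟨0, (hSprop 0).1⟩⟩
  · exact iUnion_subset fun k => (hSprop k).2.2
end

section
/- Let U be an open connected subset of ℂ, and suppose U is not full (its complement has a bounded connected component). If U is exhausted by an increasing sequence of open connected sets S₀ ⊆ S₁ ⊆ ... with U = ⋃ S_k, then there exists k such that S_k is not full. -/
/-!
A bounded component `C` of `Uᶜ`, say that of `z`, is compact, so (working inside the compact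
set `Uᶜ ∩ closure W` for a relatively compact open `W ⊇ C`) it is cut off from the rest of `Uᶜ`
by a clopen set; this yields a bounded open `V ∋ z` whose frontier lies in `U`. The frontier is
compact, hence contained in a single `S k`, and then the component of `z` in `(S k)ᶜ` cannot
leave `V`.
-/

open Set Bornology

/-- A subset of `ℂ` is full if its complement has no bounded connected components. -/
def IsFull (S : Set ℂ) : Prop :=
  ∀ z ∈ Sᶜ, ¬ IsBounded (connectedComponentIn Sᶜ z)

section Topology

variable {X : Type*} [TopologicalSpace X]

theorem isClosed_connectedComponentIn {F : Set X} (hF : IsClosed F) (x : X) :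
    IsClosed (connectedComponentIn F x) := by
  by_cases hx : x ∈ F
  · refine isClosed_of_closure_subset ?_
    exact isPreconnected_connectedComponentIn.closure.subset_connectedComponentIn
      (subset_closure (mem_connectedComponentIn hx))
      (closure_minimal (connectedComponentIn_subset F x) hF)
  · rw [connectedComponentIn_eq_empty hx]
    exact isClosed_empty

theorem exists_isClopen_mem_subset_of_connectedComponent_subset [T2Space X] [CompactSpace X]
    {x : X} {W : Set X} (hW : IsOpen W) (hxW : connectedComponent x ⊆ W) :
    ∃ A, IsClopen A ∧ x ∈ A ∧ A ⊆ W := by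
  let ClopenNhd := {s : Set X // IsClopen s ∧ x ∈ s}
  have : Nonempty ClopenNhd := ⟨⟨univ, isClopen_univ, mem_univ x⟩⟩
  have hdir : Directed (· ⊇ ·) fun s : ClopenNhd => (s : Set X) := by
    rintro ⟨s, hs, hxs⟩ ⟨t, ht, hxt⟩
    exact ⟨⟨s ∩ t, hs.inter ht, hxs, hxt⟩, inter_subset_left, inter_subset_right⟩
  obtain ⟨⟨A, hA, hxA⟩, hAW⟩ := exists_subset_nhds_of_compactSpace hdir (fun s => s.2.1.1)
    fun y hy => hW.mem_nhds <| hxW <| by rwa [connectedComponent_eq_iInter_isClopen]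
  exact ⟨A, hA, hxA, hAW⟩

theorem IsClosed.exists_isOpen_isCompact_closure_disjoint_frontier [T2Space X]
    [LocallyCompactSpace X] {F : Set X} (hF : IsClosed F) {x : X} (hx : x ∈ F)
    (hC : IsCompact (connectedComponentIn F x)) :
    ∃ V, IsOpen V ∧ x ∈ V ∧ IsCompact (closure V) ∧ Disjoint (frontier V) F := by
  obtain ⟨W, hWo, hCW, hWc⟩ := exists_isOpen_superset_and_isCompact_closure hC
  have hxW : x ∈ W := hCW (mem_connectedComponentIn hx)
  set K := F ∩ closure W
  have : CompactSpace K := isCompact_iff_compactSpace.mp (hWc.inter_left hF)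
  have hxK : x ∈ K := ⟨hx, subset_closure hxW⟩
  have hcomp : connectedComponent (⟨x, hxK⟩ : K) ⊆ Subtype.val ⁻¹' W := fun y hy =>
    hCW <| connectedComponentIn_mono x inter_subset_left <| by
      rw [connectedComponentIn_eq_image hxK]
      exact mem_image_of_mem _ hy
  obtain ⟨A, hA, hxA, hAW⟩ := exists_isClopen_mem_subset_of_connectedComponent_subset
    (hWo.preimage continuous_subtype_val) hcomp
  -- `A` and `K \ A` are disjoint compacts; a point of `F ∩ closure V` lies in `A` or near `K \ A`.
  obtain ⟨O₁, O₂, hO₁, hO₂, hAO₁, hAO₂, hO⟩ := SeparatedNhds.of_isCompact_isCompact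
    (hA.isClosed.isCompact.image continuous_subtype_val)
    (hA.isOpen.isClosed_compl.isCompact.image continuous_subtype_val)
    ((disjoint_image_iff Subtype.val_injective).2 disjoint_compl_right)
  have hVo : IsOpen (O₁ ∩ W) := hO₁.inter hWo
  refine ⟨O₁ ∩ W, hVo, ⟨hAO₁ ⟨_, hxA, rfl⟩, hxW⟩,
    hWc.of_isClosed_subset isClosed_closure (closure_mono inter_subset_right), ?_⟩
  rw [disjoint_left]
  rintro y ⟨hyV, hyV'⟩ hyF
  have hyK : y ∈ K := ⟨hyF, closure_mono inter_subset_right hyV⟩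
  by_cases hyA : (⟨y, hyK⟩ : K) ∈ A
  · rw [hVo.interior_eq] at hyV'
    exact hyV' ⟨hAO₁ ⟨_, hyA, rfl⟩, hAW hyA⟩
  · exact disjoint_left.mp (hO.closure_left hO₂) (closure_mono inter_subset_left hyV)
      (hAO₂ ⟨_, hyA, rfl⟩)

end Topology

theorem not_isFull_of_frontier_subset {S V : Set ℂ} (hVo : IsOpen V) (hVb : IsBounded V) {z : ℂ}
    (hzV : z ∈ V) (hzS : z ∉ S) (hfr : frontier V ⊆ S) : ¬ IsFull S := by
  intro hfull
  refine hfull z hzS (hVb.subset ?_)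
  refine isPreconnected_connectedComponentIn.subset_of_closure_inter_subset hVo
    ⟨z, mem_connectedComponentIn hzS, hzV⟩ fun w ⟨hwV, hwC⟩ => ?_
  by_contra hwV'
  exact connectedComponentIn_subset _ _ hwC (hfr ⟨hwV, by rwa [hVo.interior_eq]⟩)

theorem exists_not_full_of_exhaustion_general
    (U : Set ℂ) (hUo : IsOpen U) (hUnf : ¬ IsFull U)
    (S : ℕ → Set ℂ) (hSo : ∀ k, IsOpen (S k))
    (hmono : Monotone S) (hunion : U = ⋃ k, S k) :
    ∃ k, ¬ IsFull (S k) := by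
  obtain ⟨z, hz, hbdd⟩ : ∃ z ∈ Uᶜ, IsBounded (connectedComponentIn Uᶜ z) := by
    simpa [IsFull] using hUnf
  obtain ⟨V, hVo, hzV, hVc, hVfr⟩ :=
    hUo.isClosed_compl.exists_isOpen_isCompact_closure_disjoint_frontier hz
      (Metric.isCompact_of_isClosed_isBounded
        (isClosed_connectedComponentIn hUo.isClosed_compl z) hbdd)
  have hfr : frontier V ⊆ ⋃ k, S k := hunion ▸ disjoint_compl_right_iff_subset.mp hVfr
  obtain ⟨k, hk⟩ := (hVc.of_isClosed_subset isClosed_frontier frontier_subset_closure)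
    |>.elim_directed_cover S hSo hfr hmono.directed_le
  exact ⟨k, not_isFull_of_frontier_subset hVo (hVc.isBounded.subset subset_closure) hzV
    (fun hzk => hz (hunion ▸ mem_iUnion_of_mem k hzk)) hk⟩

/-- If an open connected set `U ⊆ ℂ` is not full and is exhausted by an increasing
sequence of open connected sets `S k`, then some `S k` is not full. -/
theorem exists_not_full_of_exhaustion
    (U : Set ℂ) (hUo : IsOpen U) (hUc : IsConnected U) (hUnf : ¬ IsFull U)
    (S : ℕ → Set ℂ) (hSo : ∀ k, IsOpen (S k)) (hSc : ∀ k, IsConnected (S k))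
    (hmono : Monotone S) (hunion : U = ⋃ k, S k) :
    ∃ k, ¬ IsFull (S k) :=
  exists_not_full_of_exhaustion_general U hUo hUnf S hSo hmono hunion
end

section
/- Let γ : [0,1] → ℂ be a continuous curve avoiding the critical points of a holomorphic map N with N(γ(1)) = γ(0). Then γ admits a maximal extension γ̂ : [0, M) → ℂ \ Crit(N) with γ̂|[0,1] = γ and N(γ̂(t+1)) = γ̂(t) for all t ∈ [0, M-1), and exactly one of the following holds: (i) M = ∞; (ii) M < ∞ and γ̂(t) converges to a critical point of N as t → M; (iii) M < ∞ and |γ̂(t)| → ∞ as t → M, in which case γ̂(M-1) is an asymptotic value of N. -/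
open Set Filter Metric
open scoped Topology

noncomputable section ExtAux

variable {N : ℂ → ℂ} {γ : ℝ → ℂ}

/-- An extension of the curve `γ` to the closed interval `[0, b]`. -/
def ExtOn (N : ℂ → ℂ) (γ : ℝ → ℂ) (b : ℝ) (g : ℝ → ℂ) : Prop :=
  1 ≤ b ∧ ContinuousOn g (Icc 0 b) ∧ (∀ t ∈ Icc (0:ℝ) 1, g t = γ t) ∧
  (∀ t : ℝ, 0 ≤ t → t + 1 ≤ b → N (g (t + 1)) = g t) ∧
  (∀ t ∈ Icc (0:ℝ) b, deriv N (g t) ≠ 0)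

/-- Local homeomorphism given by `N` near a noncritical point. -/
lemma exists_phomeo (hN : ∀ z, DifferentiableAt ℂ N z) {z : ℂ} (hz : deriv N z ≠ 0) :
    ∃ e : OpenPartialHomeomorph ℂ ℂ, ⇑e = N ∧ z ∈ e.source := by
  have hA : AnalyticAt ℂ N z := Differentiable.analyticAt (fun w => hN w) z
  obtain ⟨p, hp⟩ := hA
  have h1 := hp.hasStrictDerivAt
  have hz' : ((p 1) fun _ => 1) ≠ 0 := by rwa [← h1.hasDerivAt.deriv]
  have hsf := h1.hasStrictFDerivAt_equiv hz'
  exact ⟨hsf.toOpenPartialHomeomorph N, hsf.toOpenPartialHomeomorph_coe,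
    hsf.mem_toOpenPartialHomeomorph_source⟩

lemma ext_one (hγc : ContinuousOn γ (Icc 0 1))
    (hγcrit : ∀ t ∈ Icc (0:ℝ) 1, deriv N (γ t) ≠ 0)
    (hγrel : N (γ 1) = γ 0) : ExtOn N γ 1 γ := by
  refine ⟨le_refl _, hγc, fun t _ => rfl, ?_, hγcrit⟩
  intro t ht0 ht1
  have : t = 0 := le_antisymm (by linarith) ht0
  subst this
  simpa using hγrel

lemma ext_mono {b b' : ℝ} {g : ℝ → ℂ} (h : ExtOn N γ b g) (h1 : 1 ≤ b') (h2 : b' ≤ b) :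
    ExtOn N γ b' g := by
  obtain ⟨hb, hc, hγ, hf, hcr⟩ := h
  exact ⟨h1, hc.mono (Icc_subset_Icc le_rfl h2), hγ,
    fun t ht0 ht1 => hf t ht0 (ht1.trans h2),
    fun t ht => hcr t ⟨ht.1, ht.2.trans h2⟩⟩

/-- Uniqueness of extensions. -/
lemma ext_unique (hN : ∀ z, DifferentiableAt ℂ N z)
    {b₁ b₂ : ℝ} {g₁ g₂ : ℝ → ℂ} (h₁ : ExtOn N γ b₁ g₁) (h₂ : ExtOn N γ b₂ g₂) :
    ∀ t ∈ Icc (0:ℝ) (min b₁ b₂), g₁ t = g₂ t := by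
  obtain ⟨hb₁, hc₁, hγ₁, hf₁, hcr₁⟩ := h₁
  obtain ⟨hb₂, hc₂, hγ₂, hf₂, hcr₂⟩ := h₂
  set c := min b₁ b₂ with hcdef
  have h1c : 1 ≤ c := le_min hb₁ hb₂
  have hcb₁ : c ≤ b₁ := min_le_left _ _
  have hcb₂ : c ≤ b₂ := min_le_right _ _
  have hγeq : ∀ s ∈ Icc (0:ℝ) 1, g₁ s = g₂ s := fun s hs => by rw [hγ₁ s hs, hγ₂ s hs]
  set S := {t : ℝ | t ∈ Icc 0 c ∧ ∀ s ∈ Icc (0:ℝ) t, g₁ s = g₂ s} with hSdef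
  have h1S : (1:ℝ) ∈ S := ⟨⟨zero_le_one, h1c⟩, hγeq⟩
  have hSne : S.Nonempty := ⟨1, h1S⟩
  have hSbdd : BddAbove S := ⟨c, fun t ht => ht.1.2⟩
  set T := sSup S with hTdef
  have hT1 : 1 ≤ T := le_csSup hSbdd h1S
  have hTc : T ≤ c := csSup_le hSne fun t ht => ht.1.2
  have hagree_lt : ∀ s, 0 ≤ s → s < T → g₁ s = g₂ s := by
    intro s hs0 hsT
    obtain ⟨t, htS, hst⟩ := exists_lt_of_lt_csSup hSne hsT
    exact htS.2 s ⟨hs0, le_of_lt hst⟩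
  have hcw₁ : ContinuousWithinAt g₁ (Icc 0 c) T :=
    (hc₁.mono (Icc_subset_Icc le_rfl hcb₁)) T ⟨by linarith, hTc⟩
  have hcw₂ : ContinuousWithinAt g₂ (Icc 0 c) T :=
    (hc₂.mono (Icc_subset_Icc le_rfl hcb₂)) T ⟨by linarith, hTc⟩
  have hagree_T : g₁ T = g₂ T := by
    have hne : (𝓝[Ioo 0 T] T).NeBot := right_nhdsWithin_Ioo_neBot (by linarith)
    have hsub : Ioo (0:ℝ) T ⊆ Icc 0 c := fun s hs =>
      ⟨le_of_lt hs.1, le_trans (le_of_lt hs.2) hTc⟩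
    have hle : 𝓝[Ioo 0 T] T ≤ 𝓝[Icc 0 c] T := nhdsWithin_mono _ hsub
    have ht1 : Tendsto g₁ (𝓝[Ioo 0 T] T) (𝓝 (g₁ T)) := hcw₁.mono_left hle
    have ht2 : Tendsto g₂ (𝓝[Ioo 0 T] T) (𝓝 (g₂ T)) := hcw₂.mono_left hle
    have heq : g₁ =ᶠ[𝓝[Ioo 0 T] T] g₂ :=
      eventually_mem_nhdsWithin.mono fun s hs => hagree_lt s (le_of_lt hs.1) hs.2
    exact tendsto_nhds_unique (ht1.congr' heq) ht2
  have hagree_le : ∀ s ∈ Icc (0:ℝ) T, g₁ s = g₂ s := by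
    intro s hs
    rcases eq_or_lt_of_le hs.2 with h | h
    · rw [h]; exact hagree_T
    · exact hagree_lt s hs.1 h
  rcases eq_or_lt_of_le hTc with hTc' | hTc'
  · intro t ht; exact hagree_le t ⟨ht.1, by rw [hTc']; exact ht.2⟩
  exfalso
  have hcrT : deriv N (g₁ T) ≠ 0 := hcr₁ T ⟨by linarith, hTc.trans hcb₁⟩
  obtain ⟨e, hecoe, hesrc⟩ := exists_phomeo hN hcrT
  have hesrc2 : g₂ T ∈ e.source := by rwa [hagree_T] at hesrc
  have hev1 : ∀ᶠ s in 𝓝[Icc 0 c] T, g₁ s ∈ e.source := hcw₁ (e.open_source.mem_nhds hesrc)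
  have hev2 : ∀ᶠ s in 𝓝[Icc 0 c] T, g₂ s ∈ e.source := hcw₂ (e.open_source.mem_nhds hesrc2)
  have hev := hev1.and hev2
  rw [eventually_nhdsWithin_iff] at hev
  obtain ⟨δ₀, hδ₀, hball⟩ := Metric.eventually_nhds_iff.mp hev
  set δ := min (δ₀ / 2) (min (c - T) 1) with hδdef
  have hδpos : 0 < δ := lt_min (by linarith) (lt_min (by linarith) one_pos)
  have hδ1 : δ ≤ 1 := (min_le_right _ _).trans (min_le_right _ _)
  have hδc : T + δ ≤ c := by
    have := (min_le_right (δ₀ / 2) (min (c - T) 1)).trans (min_le_left (c - T) 1)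
    linarith
  have hkey : ∀ s ∈ Icc T (T + δ), g₁ s = g₂ s := by
    intro s hs
    have hsc : s ∈ Icc 0 c := ⟨by linarith [hs.1], hs.2.trans hδc⟩
    have hsball : dist s T < δ₀ := by
      rw [Real.dist_eq, abs_of_nonneg (by linarith [hs.1])]
      have : δ ≤ δ₀ / 2 := min_le_left _ _
      linarith [hs.2]
    have hmem := hball hsball hsc
    have hrw : s - 1 + 1 = s := by ring
    have h1' : N (g₁ s) = g₁ (s - 1) := by
      have := hf₁ (s - 1) (by linarith [hs.1]) (by rw [hrw]; exact hsc.2.trans hcb₁)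
      rwa [hrw] at this
    have h2' : N (g₂ s) = g₂ (s - 1) := by
      have := hf₂ (s - 1) (by linarith [hs.1]) (by rw [hrw]; exact hsc.2.trans hcb₂)
      rwa [hrw] at this
    have heqm1 : g₁ (s - 1) = g₂ (s - 1) :=
      hagree_le (s - 1) ⟨by linarith [hs.1], by linarith [hs.2]⟩
    exact e.injOn hmem.1 hmem.2 (by rw [hecoe, h1', h2', heqm1])
  have hTS : T + δ ∈ S := by
    refine ⟨⟨by linarith, hδc⟩, fun s hs => ?_⟩
    rcases le_or_gt s T with h | h
    · exact hagree_le s ⟨hs.1, h⟩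
    · exact hkey s ⟨le_of_lt h, hs.2⟩
  have := le_csSup hSbdd hTS
  linarith

lemma derivC (hN : ∀ z, DifferentiableAt ℂ N z) (z : ℂ) : ContinuousAt (deriv N) z := by
  have h : AnalyticOnNhd ℂ N univ := fun w _ => Differentiable.analyticAt (fun x => hN x) w
  exact (h.deriv z (mem_univ z)).continuousAt

/-- A closed extension can be extended strictly further. -/
lemma ext_extend_closed (hN : ∀ z, DifferentiableAt ℂ N z)
    {b : ℝ} {g : ℝ → ℂ} (h : ExtOn N γ b g) :
    ∃ b' g', b < b' ∧ ExtOn N γ b' g' := by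
  obtain ⟨hb, hc, hγ, hf, hcr⟩ := h
  have hgb : deriv N (g b) ≠ 0 := hcr b ⟨by linarith, le_rfl⟩
  obtain ⟨e, hecoe, hesrc⟩ := exists_phomeo hN hgb
  have hrwb : b - 1 + 1 = b := by ring
  have hNb : N (g b) = g (b - 1) := by
    have := hf (b - 1) (by linarith) (by rw [hrwb])
    rwa [hrwb] at this
  have htgt : g (b - 1) ∈ e.target := by
    rw [← hNb, ← hecoe]; exact e.map_source hesrc
  have hsymmb : e.symm (g (b - 1)) = g b := by
    rw [← hNb, ← hecoe]; exact e.left_inv hesrc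
  have hb1mem : (b - 1 : ℝ) ∈ Icc (0:ℝ) b := ⟨by linarith, by linarith⟩
  have hcw : ContinuousWithinAt g (Icc 0 b) (b - 1) := hc _ hb1mem
  have hevd : ∀ᶠ w in 𝓝 (g (b - 1)), w ∈ e.target ∧ deriv N (e.symm w) ≠ 0 := by
    have h1 : ∀ᶠ w in 𝓝 (g (b - 1)), w ∈ e.target := e.open_target.mem_nhds htgt
    have h2 : ContinuousAt (fun w => deriv N (e.symm w)) (g (b - 1)) :=
      (derivC hN _).comp (e.continuousAt_symm htgt)
    have h3 : deriv N (e.symm (g (b - 1))) ≠ 0 := by rw [hsymmb]; exact hgb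
    exact h1.and (h2.eventually_ne h3)
  have hev : ∀ᶠ s in 𝓝[Icc 0 b] (b - 1),
      g s ∈ e.target ∧ deriv N (e.symm (g s)) ≠ 0 := hcw hevd
  rw [eventually_nhdsWithin_iff] at hev
  obtain ⟨η₀, hη₀, hball⟩ := Metric.eventually_nhds_iff.mp hev
  set κ := min (η₀ / 2) 1 with hκdef
  have hκpos : 0 < κ := lt_min (by linarith) one_pos
  have hκ1 : κ ≤ 1 := min_le_right _ _
  have hκη : κ ≤ η₀ / 2 := min_le_left _ _
  have hprop : ∀ s ∈ Icc (b - 1) (b - 1 + κ), g s ∈ e.target ∧ deriv N (e.symm (g s)) ≠ 0 := by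
    intro s hs
    have hsmem : s ∈ Icc 0 b := ⟨by linarith [hs.1], by linarith [hs.2]⟩
    refine hball ?_ hsmem
    rw [Real.dist_eq, abs_of_nonneg (by linarith [hs.1])]
    linarith [hs.2]
  set g' : ℝ → ℂ := fun t => if t ≤ b then g t else e.symm (g (t - 1)) with hg'def
  have hg'left : ∀ t, t ≤ b → g' t = g t := fun t ht => if_pos ht
  have hg'right : ∀ t ∈ Icc b (b + κ), g' t = e.symm (g (t - 1)) := by
    intro t ht
    rcases lt_or_eq_of_le ht.1 with hlt | heq
    · exact if_neg (not_le.mpr hlt)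
    · rw [← heq, hg'left b le_rfl, hsymmb]
  refine ⟨b + κ, g', by linarith, by linarith, ?_, ?_, ?_, ?_⟩
  · -- continuity
    rw [← Icc_union_Icc_eq_Icc (by linarith : (0:ℝ) ≤ b) (by linarith : b ≤ b + κ)]
    have hmaps1 : MapsTo (fun t => t - 1) (Icc b (b + κ)) (Icc (b - 1) (b - 1 + κ)) := by
      intro t ht
      simp only [mem_Icc] at ht ⊢
      constructor <;> linarith [ht.1, ht.2]
    have hsub2 : Icc (b - 1) (b - 1 + κ) ⊆ Icc 0 b :=
      fun s hs => ⟨by linarith [hs.1], by linarith [hs.2]⟩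
    have hinner : ContinuousOn (fun t : ℝ => g (t - 1)) (Icc b (b + κ)) :=
      (hc.mono hsub2).comp ((continuous_id.sub continuous_const).continuousOn) hmaps1
    have hcomp : ContinuousOn (fun t => e.symm (g (t - 1))) (Icc b (b + κ)) :=
      e.continuousOn_symm.comp hinner (fun t ht => (hprop _ (hmaps1 ht)).1)
    intro x hx
    apply ContinuousWithinAt.union
    · by_cases hxm : x ∈ Icc (0:ℝ) b
      · exact (hc x hxm).congr (fun t ht => hg'left t ht.2) (hg'left x hxm.2)
      · exact continuousWithinAt_of_notMem_closure (by rwa [closure_Icc])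
    · by_cases hxm : x ∈ Icc b (b + κ)
      · exact (hcomp x hxm).congr hg'right (hg'right x hxm)
      · exact continuousWithinAt_of_notMem_closure (by rwa [closure_Icc])
  · intro t ht
    rw [hg'left t (ht.2.trans hb), hγ t ht]
  · intro t ht0 ht1
    by_cases hcase : t + 1 ≤ b
    · rw [hg'left (t + 1) hcase, hg'left t (by linarith), hf t ht0 hcase]
    · push_neg at hcase
      have htmem : t ∈ Icc (b - 1) (b - 1 + κ) := ⟨by linarith, by linarith⟩
      have hg't1 : g' (t + 1) = e.symm (g t) := by
        rw [hg'def]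
        simp only [not_le.mpr hcase, if_false]
        rw [show t + 1 - 1 = t from by ring]
      have hNre : N (e.symm (g t)) = g t := by
        rw [← hecoe]; exact e.right_inv (hprop t htmem).1
      rw [hg't1, hNre, hg'left t (by linarith)]
  · intro t ht
    by_cases hcase : t ≤ b
    · rw [hg'left t hcase]; exact hcr t ⟨ht.1, hcase⟩
    · push_neg at hcase
      have : g' t = e.symm (g (t - 1)) := hg'right t ⟨le_of_lt hcase, ht.2⟩
      rw [this]
      exact (hprop (t - 1) ⟨by linarith, by linarith [ht.2]⟩).2

/-- A half-open extension whose limit exists and is noncritical extends strictly further. -/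
lemma ext_extend_open (hN : ∀ z, DifferentiableAt ℂ N z)
    {M : ℝ} (hM : 1 < M) {Γ : ℝ → ℂ}
    (hc : ContinuousOn Γ (Ico 0 M))
    (hγeq : ∀ t ∈ Icc (0:ℝ) 1, Γ t = γ t)
    (hfun : ∀ t : ℝ, 0 ≤ t → t + 1 < M → N (Γ (t + 1)) = Γ t)
    (hcrit : ∀ t ∈ Ico (0:ℝ) M, deriv N (Γ t) ≠ 0)
    {z₀ : ℂ} (hz₀ : deriv N z₀ ≠ 0)
    (hlim : Tendsto Γ (𝓝[Iio M] M) (𝓝 z₀)) :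
    ∃ b g, M < b ∧ ExtOn N γ b g := by
  obtain ⟨e, hecoe, hesrc⟩ := exists_phomeo hN hz₀
  set l := 𝓝[Iio M] M with hldef
  have hM10 : (0:ℝ) < M - 1 := by linarith
  have hΓcontAt : ContinuousAt Γ (M - 1) :=
    hc.continuousAt (mem_of_superset (Ioo_mem_nhds (by linarith) (by linarith))
      Ioo_subset_Ico_self)
  have hfun' : ∀ᶠ t in l, N (Γ t) = Γ (t - 1) := by
    have h0 : ∀ᶠ t in 𝓝 M, t ∈ Ioi (1:ℝ) := Ioi_mem_nhds hM
    have h1 : ∀ᶠ t in l, t ∈ Ioi (1:ℝ) := h0.filter_mono nhdsWithin_le_nhds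
    filter_upwards [h1, eventually_mem_nhdsWithin] with t ht1 htM
    have hrw : t - 1 + 1 = t := by ring
    have := hfun (t - 1) (by simp only [mem_Ioi] at ht1; linarith) (by rw [hrw]; exact htM)
    rwa [hrw] at this
  have hshift : Tendsto (fun t : ℝ => Γ (t - 1)) l (𝓝 (Γ (M - 1))) := by
    have h1 : Tendsto (fun t : ℝ => t - 1) l (𝓝 (M - 1)) := by
      have h2 : Continuous (fun t : ℝ => t - 1) := continuous_id.sub continuous_const
      have := h2.tendsto M
      exact this.mono_left nhdsWithin_le_nhds
    exact hΓcontAt.tendsto.comp h1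
  have hNz₀ : N z₀ = Γ (M - 1) := by
    have h1 : Tendsto (fun t => N (Γ t)) l (𝓝 (N z₀)) := ((hN z₀).continuousAt.tendsto).comp hlim
    exact tendsto_nhds_unique (h1.congr' hfun') hshift
  have htgtM : Γ (M - 1) ∈ e.target := by
    rw [← hNz₀, ← hecoe]; exact e.map_source hesrc
  have hsymmM : e.symm (Γ (M - 1)) = z₀ := by
    rw [← hNz₀, ← hecoe]; exact e.left_inv hesrc
  have hevd : ∀ᶠ s in 𝓝 (M - 1),
      s ∈ Ico (0:ℝ) M ∧ Γ s ∈ e.target ∧ deriv N (e.symm (Γ s)) ≠ 0 := by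
    have h0 : ∀ᶠ s in 𝓝 (M - 1), s ∈ Ico (0:ℝ) M :=
      mem_of_superset (Ioo_mem_nhds (by linarith) (by linarith)) Ioo_subset_Ico_self
    have h1 : ∀ᶠ s in 𝓝 (M - 1), Γ s ∈ e.target :=
      hΓcontAt (e.open_target.mem_nhds htgtM)
    have h2 : ContinuousAt (fun s => deriv N (e.symm (Γ s))) (M - 1) :=
      (derivC hN _).comp ((e.continuousAt_symm htgtM).comp hΓcontAt)
    have h3 : deriv N (e.symm (Γ (M - 1))) ≠ 0 := by rw [hsymmM]; exact hz₀
    exact h0.and (h1.and (h2.eventually_ne h3))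
  obtain ⟨η₀, hη₀, hball⟩ := Metric.eventually_nhds_iff.mp hevd
  have hsrcev : ∀ᶠ t in l, Γ t ∈ e.source := hlim (e.open_source.mem_nhds hesrc)
  obtain ⟨s₁, hs₁M, hIoo⟩ := (nhdsLT_basis_of_exists_lt ⟨M - 1, by linarith⟩).eventually_iff.mp hsrcev
  set δ := min (min (η₀ / 2) (1 / 2)) (min ((M - 1) / 2) ((M - s₁) / 2)) with hδdef
  have hδpos : 0 < δ :=
    lt_min (lt_min (by linarith) (by norm_num)) (lt_min (by linarith) (by linarith))
  have hδη : δ ≤ η₀ / 2 := (min_le_left _ _).trans (min_le_left _ _)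
  have hδhalf : δ ≤ 1 / 2 := (min_le_left _ _).trans (min_le_right _ _)
  have hδM1 : δ ≤ (M - 1) / 2 := (min_le_right _ _).trans (min_le_left _ _)
  have hδs₁ : δ ≤ (M - s₁) / 2 := (min_le_right _ _).trans (min_le_right _ _)
  have hMδ1 : 1 < M - δ := by linarith
  have hMδs₁ : s₁ < M - δ := by linarith
  set κ := δ / 2 with hκdef
  have hprop : ∀ s : ℝ, |s - (M - 1)| ≤ δ →
      s ∈ Ico (0:ℝ) M ∧ Γ s ∈ e.target ∧ deriv N (e.symm (Γ s)) ≠ 0 := by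
    intro s hs
    exact hball (by rw [Real.dist_eq]; linarith)
  have hcons : ∀ t, M - δ ≤ t → t < M → Γ t = e.symm (Γ (t - 1)) := by
    intro t ht1 ht2
    have hsrc : Γ t ∈ e.source := hIoo ⟨by linarith, ht2⟩
    have hrw : t - 1 + 1 = t := by ring
    have hft : N (Γ t) = Γ (t - 1) := by
      have := hfun (t - 1) (by linarith) (by rw [hrw]; exact ht2)
      rwa [hrw] at this
    rw [← hft, ← hecoe, e.left_inv hsrc]
  set g' : ℝ → ℂ := fun t => if t ≤ M - δ then Γ t else e.symm (Γ (t - 1)) with hg'def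
  have hg'left : ∀ t, t ≤ M - δ → g' t = Γ t := fun t ht => if_pos ht
  have hg'right : ∀ t ∈ Icc (M - δ) (M + κ), g' t = e.symm (Γ (t - 1)) := by
    intro t ht
    rcases lt_or_eq_of_le ht.1 with hlt | heq
    · exact if_neg (not_le.mpr hlt)
    · rw [← heq, hg'left (M - δ) le_rfl, hcons (M - δ) le_rfl (by linarith)]
  refine ⟨M + κ, g', by linarith, by linarith, ?_, ?_, ?_, ?_⟩
  · -- continuity
    rw [← Icc_union_Icc_eq_Icc (by linarith : (0:ℝ) ≤ M - δ) (by linarith : M - δ ≤ M + κ)]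
    have hmaps1 : MapsTo (fun t : ℝ => t - 1) (Icc (M - δ) (M + κ))
        (Icc (M - 1 - δ) (M - 1 + κ)) := by
      intro t ht
      simp only [mem_Icc] at ht ⊢
      constructor <;> linarith [ht.1, ht.2]
    have hsub2 : Icc (M - 1 - δ) (M - 1 + κ) ⊆ Ico 0 M := by
      intro s hs
      exact ⟨by linarith [hs.1], by linarith [hs.2]⟩
    have hinner : ContinuousOn (fun t : ℝ => Γ (t - 1)) (Icc (M - δ) (M + κ)) :=
      (hc.mono hsub2).comp ((continuous_id.sub continuous_const).continuousOn) hmaps1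
    have htmem : ∀ s ∈ Icc (M - 1 - δ) (M - 1 + κ), Γ s ∈ e.target := by
      intro s hs
      exact (hprop s (abs_le.mpr ⟨by linarith [hs.1], by linarith [hs.2]⟩)).2.1
    have hcomp : ContinuousOn (fun t => e.symm (Γ (t - 1))) (Icc (M - δ) (M + κ)) :=
      e.continuousOn_symm.comp hinner (fun t ht => htmem _ (hmaps1 ht))
    intro x hx
    apply ContinuousWithinAt.union
    · by_cases hxm : x ∈ Icc (0:ℝ) (M - δ)
      · have hsub : Icc (0:ℝ) (M - δ) ⊆ Ico 0 M := fun s hs => ⟨hs.1, by linarith [hs.2]⟩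
        exact ((hc.mono hsub) x hxm).congr (fun t ht => hg'left t ht.2) (hg'left x hxm.2)
      · exact continuousWithinAt_of_notMem_closure (by rwa [closure_Icc])
    · by_cases hxm : x ∈ Icc (M - δ) (M + κ)
      · exact (hcomp x hxm).congr hg'right (hg'right x hxm)
      · exact continuousWithinAt_of_notMem_closure (by rwa [closure_Icc])
  · intro t ht
    rw [hg'left t (by linarith [ht.2]), hγeq t ht]
  · intro t ht0 ht1
    by_cases hcase : t + 1 ≤ M - δ
    · rw [hg'left (t + 1) hcase, hg'left t (by linarith), hfun t ht0 (by linarith)]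
    · push_neg at hcase
      have htd : |t - (M - 1)| ≤ δ := abs_le.mpr ⟨by linarith, by linarith⟩
      have hg't1 : g' (t + 1) = e.symm (Γ t) := by
        rw [hg'def]
        simp only [not_le.mpr hcase, if_false]
        rw [show t + 1 - 1 = t from by ring]
      have hNre : N (e.symm (Γ t)) = Γ t := by
        rw [← hecoe]; exact e.right_inv (hprop t htd).2.1
      rw [hg't1, hNre, hg'left t (by linarith)]
  · intro t ht
    by_cases hcase : t ≤ M - δ
    · rw [hg'left t hcase]
      exact hcrit t ⟨ht.1, by linarith⟩
    · push_neg at hcase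
      rw [hg'right t ⟨le_of_lt hcase, ht.2⟩]
      exact (hprop (t - 1) (abs_le.mpr ⟨by linarith, by linarith [ht.2]⟩)).2.2

end ExtAux

open Set Filter Metric
open scoped Topology

/-- Possibilities for the maximal extension of a curve. Given a holomorphic map `N`
and a continuous curve `γ : [0,1] → ℂ \ Crit(N)` with `N (γ 1) = γ 0`, the curve
admits a maximal extension `γ̂` with `N (γ̂ (t+1)) = γ̂ t`, avoiding the critical
points of `N`, and exactly one of three cases occurs:
(i) the extension is defined on all of `[0,∞)`;
(ii) it is defined on `[0,M)` with `M < ∞`, is maximal, and `γ̂ t` converges to a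
critical point of `N` as `t → M`;
(iii) it is defined on `[0,M)` with `M < ∞`, is maximal, `|γ̂ t| → ∞` as `t → M`,
and `γ̂ (M-1)` is an asymptotic value of `N` (namely `N (γ̂ t) → γ̂ (M-1)` along a
path tending to `∞`). Cases (ii) and (iii) are mutually exclusive, and both include
maximality, which excludes case (i). -/
theorem extension_of_curve_trichotomy
    (N : ℂ → ℂ) (hN : ∀ z, DifferentiableAt ℂ N z)
    (γ : ℝ → ℂ) (hγc : ContinuousOn γ (Icc 0 1))
    (hγcrit : ∀ t ∈ Icc (0:ℝ) 1, deriv N (γ t) ≠ 0)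
    (hγrel : N (γ 1) = γ 0) :
    -- (i) the extension exists for all times
    (∃ γh : ℝ → ℂ, ContinuousOn γh (Ici 0) ∧
        (∀ t ∈ Icc (0:ℝ) 1, γh t = γ t) ∧
        (∀ t : ℝ, 0 ≤ t → N (γh (t + 1)) = γh t) ∧
        (∀ t : ℝ, 0 ≤ t → deriv N (γh t) ≠ 0)) ∨
    -- (ii)/(iii) the maximal extension lives on [0, M) with M < ∞
    (∃ M : ℝ, 1 < M ∧ ∃ γh : ℝ → ℂ, ContinuousOn γh (Ico 0 M) ∧
        (∀ t ∈ Icc (0:ℝ) 1, γh t = γ t) ∧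
        (∀ t : ℝ, 0 ≤ t → t + 1 < M → N (γh (t + 1)) = γh t) ∧
        (∀ t ∈ Ico (0:ℝ) M, deriv N (γh t) ≠ 0) ∧
        -- maximality: no extension beyond M
        (∀ M' : ℝ, M < M' → ¬ ∃ γh' : ℝ → ℂ, ContinuousOn γh' (Ico 0 M') ∧
            (∀ t ∈ Ico (0:ℝ) M, γh' t = γh t) ∧
            (∀ t : ℝ, 0 ≤ t → t + 1 < M' → N (γh' (t + 1)) = γh' t) ∧
            (∀ t ∈ Ico (0:ℝ) M', deriv N (γh' t) ≠ 0)) ∧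
        -- (ii) convergence to a critical point, or (iii) escape to ∞ with an
        -- asymptotic value
        ((∃ c : ℂ, deriv N c = 0 ∧ Tendsto γh (nhdsWithin M (Iio M)) (nhds c)) ∨
         (Tendsto (fun t => ‖γh t‖) (nhdsWithin M (Iio M)) atTop ∧
          Tendsto (fun t => N (γh t)) (nhdsWithin M (Iio M)) (nhds (γh (M - 1)))))) := by
  classical
  set E := {b : ℝ | ∃ g : ℝ → ℂ, ExtOn N γ b g} with hEdef
  have hone : ExtOn N γ 1 γ := ext_one hγc hγcrit hγrel
  have h1E : (1:ℝ) ∈ E := ⟨γ, hone⟩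
  by_cases hbdd : BddAbove E
  case neg =>
    left
    have hch : ∀ x : ℝ, ∃ p : ℝ × (ℝ → ℂ), x ≤ p.1 ∧ ExtOn N γ p.1 p.2 := by
      intro x
      obtain ⟨b, hbE, hxb⟩ := not_bddAbove_iff.mp hbdd x
      obtain ⟨g, hg⟩ := hbE
      exact ⟨(b, g), le_of_lt hxb, hg⟩
    choose P hP1 hP2 using hch
    set Γ : ℝ → ℂ := fun t => (P t).2 t with hΓdef
    have hcoh : ∀ x t, 0 ≤ t → t ≤ (P x).1 → Γ t = (P x).2 t := by
      intro x t ht0 htx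
      exact ext_unique hN (hP2 t) (hP2 x) t ⟨ht0, le_min (hP1 t) htx⟩
    refine ⟨Γ, ?_, ?_, ?_, ?_⟩
    · intro t₀ ht₀
      have hb := hP1 (t₀ + 1)
      have hext := hP2 (t₀ + 1)
      have hsub : Ici (0:ℝ) ∩ Iio (t₀ + 1) ⊆ Icc 0 (P (t₀ + 1)).1 :=
        fun s hs => ⟨hs.1, le_trans (le_of_lt hs.2) hb⟩
      have ht₀mem : t₀ ∈ Ici (0:ℝ) ∩ Iio (t₀ + 1) := ⟨ht₀, by simp only [mem_Iio]; linarith⟩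
      have hcw : ContinuousWithinAt (P (t₀ + 1)).2 (Ici 0 ∩ Iio (t₀ + 1)) t₀ :=
        (hext.2.1.mono hsub) t₀ ht₀mem
      have hΓeq : ∀ s ∈ Ici (0:ℝ) ∩ Iio (t₀ + 1), Γ s = (P (t₀ + 1)).2 s :=
        fun s hs => hcoh (t₀ + 1) s hs.1 (le_trans (le_of_lt hs.2) hb)
      have hcw' : ContinuousWithinAt Γ (Ici 0 ∩ Iio (t₀ + 1)) t₀ :=
        hcw.congr hΓeq (hΓeq t₀ ht₀mem)
      exact hcw'.mono_of_mem_nhdsWithin (inter_mem self_mem_nhdsWithin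
        (mem_nhdsWithin_of_mem_nhds (Iio_mem_nhds (by linarith))))
    · intro t ht
      exact ext_unique hN (hP2 t) hone t ⟨ht.1, le_min (hP1 t) ht.2⟩
    · intro t ht0
      have hb := hP1 (t + 1)
      have hext := hP2 (t + 1)
      rw [hcoh (t + 1) (t + 1) (by linarith) hb, hcoh (t + 1) t ht0 (by linarith)]
      exact hext.2.2.2.1 t ht0 hb
    · intro t ht0
      exact (hP2 t).2.2.2.2 t ⟨ht0, hP1 t⟩
  case pos =>
    right
    set M := sSup E with hMdef
    obtain ⟨b₀, g₀, hb₀1, hext₀⟩ := ext_extend_closed hN hone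
    have hM1 : 1 < M := lt_of_lt_of_le hb₀1 (le_csSup hbdd ⟨g₀, hext₀⟩)
    have hEmem : ∀ b : ℝ, 1 ≤ b → b < M → ∃ g, ExtOn N γ b g := by
      intro b hb1 hbM
      obtain ⟨b', hb'E, hbb'⟩ := exists_lt_of_lt_csSup ⟨1, h1E⟩ hbM
      obtain ⟨g', hg'⟩ := hb'E
      exact ⟨g', ext_mono hg' hb1 (le_of_lt hbb')⟩
    have hch : ∀ b : ℝ, ∃ g : ℝ → ℂ, 1 ≤ b → b < M → ExtOn N γ b g := by
      intro b
      by_cases hb : 1 ≤ b ∧ b < M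
      · obtain ⟨g, hg⟩ := hEmem b hb.1 hb.2; exact ⟨g, fun _ _ => hg⟩
      · exact ⟨γ, fun h1 h2 => absurd ⟨h1, h2⟩ hb⟩
    choose gE hgE using hch
    set β : ℝ → ℝ := fun t => (max 1 t + M) / 2 with hβdef
    have hβprop : ∀ t, t < M → 1 ≤ β t ∧ β t < M ∧ t < β t := by
      intro t htM
      have hβt : β t = (max 1 t + M) / 2 := rfl
      have h1 : max 1 t < M := max_lt hM1 htM
      have h2 := le_max_left 1 t
      have h3 := le_max_right 1 t
      refine ⟨by rw [hβt]; linarith, by rw [hβt]; linarith, by rw [hβt]; linarith⟩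
    set Γ : ℝ → ℂ := fun t => gE (β t) t with hΓdef
    have hcoh : ∀ b (g : ℝ → ℂ), ExtOn N γ b g → ∀ t, 0 ≤ t → t ≤ b → t < M → Γ t = g t := by
      intro b g hg t ht0 htb htM
      obtain ⟨h1, h2, h3⟩ := hβprop t htM
      exact ext_unique hN (hgE (β t) h1 h2) hg t ⟨ht0, le_min (le_of_lt h3) htb⟩
    have hΓc : ContinuousOn Γ (Ico 0 M) := by
      intro t₀ ht₀
      obtain ⟨h1, h2, h3⟩ := hβprop t₀ ht₀.2
      have hext := hgE (β t₀) h1 h2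
      have hsub : Ico (0:ℝ) M ∩ Iio (β t₀) ⊆ Icc 0 (β t₀) :=
        fun s hs => ⟨hs.1.1, le_of_lt hs.2⟩
      have ht₀mem : t₀ ∈ Ico (0:ℝ) M ∩ Iio (β t₀) := ⟨ht₀, h3⟩
      have hcw : ContinuousWithinAt (gE (β t₀)) (Ico 0 M ∩ Iio (β t₀)) t₀ :=
        (hext.2.1.mono hsub) t₀ ht₀mem
      have hΓeq : ∀ s ∈ Ico (0:ℝ) M ∩ Iio (β t₀), Γ s = gE (β t₀) s :=
        fun s hs => hcoh (β t₀) _ hext s hs.1.1 (le_of_lt hs.2) hs.1.2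
      have hcw' : ContinuousWithinAt Γ (Ico 0 M ∩ Iio (β t₀)) t₀ :=
        hcw.congr hΓeq (hΓeq t₀ ht₀mem)
      exact hcw'.mono_of_mem_nhdsWithin (inter_mem self_mem_nhdsWithin
        (mem_nhdsWithin_of_mem_nhds (Iio_mem_nhds h3)))
    have hΓγ : ∀ t ∈ Icc (0:ℝ) 1, Γ t = γ t := by
      intro t ht
      have := hcoh 1 γ hone t ht.1 ht.2 (lt_of_le_of_lt ht.2 hM1)
      rw [this]
    have hΓfun : ∀ t : ℝ, 0 ≤ t → t + 1 < M → N (Γ (t + 1)) = Γ t := by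
      intro t ht0 htM
      set b := (t + 1 + M) / 2 with hbdef
      have hb1 : 1 ≤ b := by rw [hbdef]; linarith
      have hbM : b < M := by rw [hbdef]; linarith
      have htb : t + 1 ≤ b := by rw [hbdef]; linarith
      obtain ⟨g, hg⟩ := hEmem b hb1 hbM
      rw [hcoh b g hg (t + 1) (by linarith) htb (by linarith),
        hcoh b g hg t ht0 (by linarith) (by linarith)]
      exact hg.2.2.2.1 t ht0 htb
    have hΓcrit : ∀ t ∈ Ico (0:ℝ) M, deriv N (Γ t) ≠ 0 := by
      intro t ht
      obtain ⟨h1, h2, h3⟩ := hβprop t ht.2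
      exact (hgE (β t) h1 h2).2.2.2.2 t ⟨ht.1, le_of_lt h3⟩
    -- limit of N ∘ Γ at M
    set l := 𝓝[Iio M] M with hldef
    have hM10 : (0:ℝ) < M - 1 := by linarith
    have hΓcontAt : ContinuousAt Γ (M - 1) :=
      hΓc.continuousAt (mem_of_superset (Ioo_mem_nhds (by linarith) (by linarith))
        Ioo_subset_Ico_self)
    have hfun' : ∀ᶠ t in l, N (Γ t) = Γ (t - 1) := by
      have h0 : ∀ᶠ t in 𝓝 M, t ∈ Ioi (1:ℝ) := Ioi_mem_nhds hM1
      have h1 : ∀ᶠ t in l, t ∈ Ioi (1:ℝ) := h0.filter_mono nhdsWithin_le_nhds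
      filter_upwards [h1, eventually_mem_nhdsWithin] with t ht1 htM
      have hrw : t - 1 + 1 = t := by ring
      have := hΓfun (t - 1) (by simp only [mem_Ioi] at ht1; linarith) (by rw [hrw]; exact htM)
      rwa [hrw] at this
    have hshift : Tendsto (fun t : ℝ => Γ (t - 1)) l (𝓝 (Γ (M - 1))) := by
      have h1 : Tendsto (fun t : ℝ => t - 1) l (𝓝 (M - 1)) := by
        have h2 : Continuous (fun t : ℝ => t - 1) := continuous_id.sub continuous_const
        exact (h2.tendsto M).mono_left nhdsWithin_le_nhds
      exact hΓcontAt.tendsto.comp h1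
    have hlimN : Tendsto (fun t => N (Γ t)) l (𝓝 (Γ (M - 1))) :=
      Filter.Tendsto.congr' (hfun'.mono fun t ht => ht.symm) hshift
    have hfiber : ∀ z : ℂ, MapClusterPt z l Γ → N z = Γ (M - 1) := by
      intro z hz
      have h1 : (𝓝 z ⊓ map Γ l).NeBot := hz
      have hmap : map N (𝓝 z ⊓ map Γ l) ≤ 𝓝 (N z) ⊓ 𝓝 (Γ (M - 1)) := by
        refine le_inf ?_ ?_
        · exact (map_mono inf_le_left).trans (hN z).continuousAt
        · calc map N (𝓝 z ⊓ map Γ l) ≤ map N (map Γ l) := map_mono inf_le_right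
            _ = map (fun t => N (Γ t)) l := map_map
            _ ≤ 𝓝 (Γ (M - 1)) := hlimN
      exact eq_of_nhds_neBot ((h1.map N).mono hmap)
    have hiso : ∀ z : ℂ, N z = Γ (M - 1) →
        ∃ r > 0, ∀ w, w ≠ z → dist w z < r → N w ≠ Γ (M - 1) := by
      intro z hzf
      have hA : ∀ w, AnalyticAt ℂ N w := fun w => Differentiable.analyticAt (fun x => hN x) w
      rcases (hA z).eventually_eq_or_eventually_ne
          (analyticAt_const : AnalyticAt ℂ (fun _ : ℂ => Γ (M - 1)) z) with h | h
      · exfalso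
        have hAll : N = fun _ => Γ (M - 1) :=
          AnalyticOnNhd.eq_of_eventuallyEq (fun w _ => hA w) (fun w _ => analyticAt_const) h
        have hcr := hγcrit 0 ⟨le_rfl, zero_le_one⟩
        rw [hAll] at hcr
        simp at hcr
      · rw [eventually_nhdsWithin_iff] at h
        obtain ⟨r, hr, hball⟩ := Metric.eventually_nhds_iff.mp h
        refine ⟨r, hr, fun w hw hd => ?_⟩
        have := hball hd (by simpa using hw)
        simpa using this
    have hclusfreq : ∀ s : Set ℂ, IsCompact s → (∃ᶠ t in l, Γ t ∈ s) →
        ∃ w ∈ s, MapClusterPt w l Γ := by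
      intro s hs hfreq
      have hne : (map Γ l ⊓ 𝓟 s).NeBot := by
        rw [Filter.inf_principal_neBot_iff]
        intro U hU
        have hev : ∀ᶠ t in l, Γ t ∈ U := mem_map.mp hU
        obtain ⟨t, hts, htU⟩ := (hfreq.and_eventually hev).exists
        exact ⟨Γ t, htU, hts⟩
      obtain ⟨w, hws, hcl⟩ := hs.exists_clusterPt (inf_le_right : map Γ l ⊓ 𝓟 s ≤ 𝓟 s)
      exact ⟨w, hws, hcl.mono inf_le_left⟩
    have hsphere : ∀ (z : ℂ) (ρ : ℝ), 0 < ρ → (∃ᶠ t in l, dist (Γ t) z < ρ / 2) →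
        (∃ᶠ t in l, ¬ dist (Γ t) z < ρ) → ∃ᶠ t in l, dist (Γ t) z = ρ := by
      intro z ρ hρ hin hout
      rw [hldef, (nhdsLT_basis_of_exists_lt ⟨M - 1, by linarith⟩).frequently_iff] at hin hout ⊢
      intro s hsM
      have hs'M : max s 1 < M := max_lt hsM hM1
      obtain ⟨t₁, ht₁, hd₁⟩ := hin (max s 1) hs'M
      obtain ⟨t₂, ht₂, hd₂⟩ := hout t₁ ht₁.2
      have ht₁₂ : t₁ ≤ t₂ := le_of_lt ht₂.1
      have hsubIco : Icc t₁ t₂ ⊆ Ico 0 M := by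
        intro u hu
        have h1 := le_max_right s 1
        exact ⟨by linarith [hu.1, ht₁.1], lt_of_le_of_lt hu.2 ht₂.2⟩
      have hcont : ContinuousOn (fun u => dist (Γ u) z) (Icc t₁ t₂) :=
        (continuous_id.dist continuous_const).comp_continuousOn (hΓc.mono hsubIco)
      have hmem : ρ ∈ Icc (dist (Γ t₁) z) (dist (Γ t₂) z) :=
        ⟨by linarith, by linarith [not_lt.mp hd₂]⟩
      obtain ⟨u, hu, hdu⟩ := intermediate_value_Icc ht₁₂ hcont hmem
      refine ⟨u, ⟨?_, lt_of_le_of_lt hu.2 ht₂.2⟩, hdu⟩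
      have h1 := le_max_left s 1
      linarith [hu.1, ht₁.1]
    have htrap : ∀ z : ℂ, MapClusterPt z l Γ → N z = Γ (M - 1) → Tendsto Γ l (𝓝 z) := by
      intro z hz hzf
      obtain ⟨r, hr, hrprop⟩ := hiso z hzf
      rw [Metric.tendsto_nhds]
      intro ε hε
      by_contra hcon
      rw [not_eventually] at hcon
      set ρ := min ε (r / 2) with hρdef
      have hρpos : 0 < ρ := lt_min hε (by linarith)
      have hρr : ρ < r := lt_of_le_of_lt (min_le_right _ _) (by linarith)
      have hin : ∃ᶠ t in l, dist (Γ t) z < ρ / 2 := by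
        have := (mapClusterPt_iff_frequently.mp hz) (ball z (ρ / 2)) (ball_mem_nhds z (by linarith))
        exact this.mono fun t ht => by simpa [mem_ball] using ht
      have hout : ∃ᶠ t in l, ¬ dist (Γ t) z < ρ := by
        refine hcon.mono fun t ht => ?_
        have h1 : ρ ≤ ε := min_le_left _ _
        intro h2
        exact ht (lt_of_lt_of_le h2 h1)
      have hfreqsph := hsphere z ρ hρpos hin hout
      obtain ⟨w, hws, hwcl⟩ := hclusfreq (sphere z ρ) (isCompact_sphere z ρ)
        (hfreqsph.mono fun t ht => by simpa [dist_eq_norm] using ht)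
      rw [mem_sphere_iff_norm] at hws
      have hwz : w ≠ z := by
        intro h
        rw [h] at hws
        simp at hws
        linarith
      refine hrprop w hwz ?_ (hfiber w hwcl)
      rw [dist_eq_norm, hws]
      exact hρr
    refine ⟨M, hM1, Γ, hΓc, hΓγ, hΓfun, hΓcrit, ?_, ?_⟩
    · -- maximality
      rintro M' hMM' ⟨γh', hc', heq', hfun'2, hcrit'⟩
      have hb1 : (1:ℝ) ≤ (M + M') / 2 := by linarith
      have hbM : M < (M + M') / 2 := by linarith
      have hbM' : (M + M') / 2 < M' := by linarith
      have hmemE : (M + M') / 2 ∈ E := by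
        refine ⟨γh', hb1, hc'.mono ?_, ?_, ?_, ?_⟩
        · intro s hs
          exact ⟨hs.1, lt_of_le_of_lt hs.2 hbM'⟩
        · intro t ht
          rw [heq' t ⟨ht.1, lt_of_le_of_lt ht.2 hM1⟩]
          exact hΓγ t ht
        · intro t ht0 ht1
          exact hfun'2 t ht0 (by linarith)
        · intro t ht
          exact hcrit' t ⟨ht.1, by linarith [ht.2]⟩
      have := le_csSup hbdd hmemE
      linarith
    · -- trichotomy
      by_cases hclus : ∃ z : ℂ, MapClusterPt z l Γ
      · obtain ⟨z₀, hz₀⟩ := hclus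
        have hz₀f : N z₀ = Γ (M - 1) := hfiber z₀ hz₀
        have htend : Tendsto Γ l (𝓝 z₀) := htrap z₀ hz₀ hz₀f
        by_cases hzc : deriv N z₀ = 0
        · exact Or.inl ⟨z₀, hzc, htend⟩
        · exfalso
          obtain ⟨b, g, hMb, hext⟩ := ext_extend_open hN hM1 hΓc hΓγ hΓfun hΓcrit hzc htend
          have := le_csSup hbdd ⟨g, hext⟩
          linarith
      · refine Or.inr ⟨?_, hlimN⟩
        rw [Filter.tendsto_atTop]
        intro R
        by_contra hcon
        rw [not_eventually] at hcon
        have hfreq : ∃ᶠ t in l, Γ t ∈ closedBall 0 (max R 0) := by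
          refine hcon.mono fun t ht => ?_
          rw [mem_closedBall, dist_zero_right]
          push_neg at ht
          exact le_of_lt (lt_of_lt_of_le ht (le_max_left R 0))
        obtain ⟨w, _, hw⟩ := hclusfreq (closedBall 0 (max R 0))
          (isCompact_closedBall 0 _) hfreq
        exact hclus ⟨w, hw⟩
end

section
/- If N is holomorphic and injective on a neighborhood V of a point a ∈ ℂ, and γ̂ : [0,T) → ℂ is an extension curve (N(γ̂(t+1)) = γ̂(t)) with a sequence t_n ↗ T such that γ̂(t_n) → a, then the extension can be continued strictly beyond T (T is not maximal). -/
/-!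
Being injective and holomorphic near `a`, `N` is open at `a` and maps a small closed ball
`B̄(a, r)` homeomorphically onto its image, with continuous inverse `g`. Letting `t = tₙ → T` in
`N (γ̂ t) = γ̂ (t - 1)` gives `γ̂ (T - 1) = N a`, so on `[T - 1 - δ, T - 1 + δ]` the curve stays in
the neighbourhood `N '' B(a, r)` of `N a`. On `[T - δ, T)` it cannot leave `B(a, r)`: by
injectivity, a point `γ̂ t` of the closed ball is the preimage of `γ̂ (t - 1) ∈ N '' B(a, r)`, hence
lies in the open ball, and `γ̂ (tₙ) → a` together with connectedness does the rest. So
`γ̂ t = g (γ̂ (t - 1))` on `[T - δ, T)`, and `t ↦ g (γ̂ (t - 1))` continues `γ̂` up to `T + δ`.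
-/

open Set Filter Topology Metric Function

theorem IsCompact.continuousOn_image_of_leftInvOn {X Y : Type*} [TopologicalSpace X]
    [TopologicalSpace Y] [T2Space Y] {f : X → Y} {g : Y → X} {K : Set X} (hK : IsCompact K)
    (hf : ContinuousOn f K) (hleft : LeftInvOn g f K) : ContinuousOn g (f '' K) := by
  refine continuousOn_iff_isClosed.2 fun t ht ↦ ⟨f '' (t ∩ K), ?_, ?_⟩
  · exact ((hK.inter_left ht).image_of_continuousOn (hf.mono inter_subset_right)).isClosed
  · rw [inter_eq_self_of_subset_left (image_mono inter_subset_right), hleft.image_inter']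

theorem AnalyticAt.nhds_le_map_nhds_of_injOn {E : Type*} [NormedAddCommGroup E]
    [NormedSpace ℂ E] [Nontrivial E] {f : E → ℂ} {z : E} {V : Set E} (hf : AnalyticAt ℂ f z)
    (hV : V ∈ 𝓝 z) (hinj : InjOn f V) : 𝓝 (f z) ≤ map f (𝓝 z) := by
  refine hf.eventually_constant_or_nhds_le_map_nhds.resolve_left fun hconst ↦ ?_
  have hpunct : ∀ᶠ w in 𝓝[≠] z, (f w = f z ∧ w ∈ V) ∧ w ≠ z :=
    ((hconst.and hV).filter_mono nhdsWithin_le_nhds).and self_mem_nhdsWithin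
  obtain ⟨w, ⟨hw, hwV⟩, hwz⟩ := hpunct.exists
  exact hwz (hinj hwV (mem_of_mem_nhds hV) hw)

structure IsExtensionCurve {X : Type*} [TopologicalSpace X] (N : X → X) (T : ℝ) (γ : ℝ → X) :
    Prop where
  continuousOn : ContinuousOn γ (Ico 0 T)
  map_add_one : ∀ t : ℝ, 0 ≤ t → t + 1 < T → N (γ (t + 1)) = γ t

namespace IsExtensionCurve

variable {X : Type*} [TopologicalSpace X] {N : X → X} {T : ℝ} {γ : ℝ → X}

theorem map_apply_eq_apply_sub_one (hγ : IsExtensionCurve N T γ) {t : ℝ} (ht : 1 ≤ t)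
    (htT : t < T) : N (γ t) = γ (t - 1) := by
  simpa using hγ.map_add_one (t - 1) (by linarith) (by linarith)

theorem apply_sub_one_eq_of_tendsto [T2Space X] (hγ : IsExtensionCurve N T γ) (hT : 1 < T)
    {a : X} (hN : ContinuousAt N a) {ι : Type*} {l : Filter ι} [l.NeBot] {τ : ι → ℝ}
    (hτT : ∀ i, τ i < T) (hτ : Tendsto τ l (𝓝 T)) (hγτ : Tendsto (γ ∘ τ) l (𝓝 a)) :
    γ (T - 1) = N a := by
  have hcont : ContinuousAt γ (T - 1) :=
    hγ.continuousOn.continuousAt (Ico_mem_nhds (by linarith) (by linarith))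
  have hlim : Tendsto (fun i ↦ γ (τ i - 1)) l (𝓝 (γ (T - 1))) :=
    hcont.tendsto.comp (hτ.sub_const 1)
  refine tendsto_nhds_unique hlim ((hN.tendsto.comp hγτ).congr' ?_)
  filter_upwards [hτ.eventually (lt_mem_nhds hT)] with i hi
  exact hγ.map_apply_eq_apply_sub_one hi.le (hτT i)

theorem exists_mapsTo_Icc_sub_one (hγ : IsExtensionCurve N T γ) (hT : 1 < T) {W : Set X}
    (hW : W ∈ 𝓝 (γ (T - 1))) :
    ∃ δ > 0, 2 * δ ≤ 1 ∧ 1 + δ ≤ T ∧ MapsTo γ (Icc (T - 1 - δ) (T - 1 + δ)) W := by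
  have hcont : ContinuousAt γ (T - 1) :=
    hγ.continuousOn.continuousAt (Ico_mem_nhds (by linarith) (by linarith))
  obtain ⟨ε, hε, hεW⟩ := nhds_basis_closedBall.mem_iff.1 (hcont.preimage_mem_nhds hW)
  refine ⟨min ε (min (1 / 2) (T - 1)), by positivity, ?_, ?_, fun t ht ↦ hεW ?_⟩
  · linarith [min_le_left (1 / 2 : ℝ) (T - 1), min_le_right ε (min (1 / 2) (T - 1))]
  · linarith [min_le_right (1 / 2 : ℝ) (T - 1), min_le_right ε (min (1 / 2) (T - 1))]
  · rw [Real.closedBall_eq_Icc]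
    have := min_le_left ε (min (1 / 2) (T - 1))
    exact ⟨by linarith [ht.1], by linarith [ht.2]⟩

theorem mapsTo_Ico_of_injOn_closure (hγ : IsExtensionCurve N T γ) {U : Set X} (hU : IsOpen U)
    (hinj : InjOn N (closure U)) {s₀ s₁ : ℝ} (hs₀ : 1 ≤ s₀) (hs₁ : s₁ ≤ T)
    (hprev : MapsTo γ (Ico (s₀ - 1) (s₁ - 1)) (N '' U)) (hne : ∃ t ∈ Ico s₀ s₁, γ t ∈ U) :
    MapsTo γ (Ico s₀ s₁) U := by
  have hconn : IsPreconnected (γ '' Ico s₀ s₁) :=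
    isPreconnected_Ico.image _ <| hγ.continuousOn.mono <| Ico_subset_Ico (by linarith) hs₁
  obtain ⟨t, ht, htU⟩ := hne
  refine mapsTo_iff_image_subset.2 <|
    hconn.subset_of_closure_inter_subset hU ⟨γ t, mem_image_of_mem γ ht, htU⟩ ?_
  rintro _ ⟨hcl, s, hs, rfl⟩
  obtain ⟨u, hu, hNu⟩ := hprev (x := s - 1) ⟨by linarith [hs.1], by linarith [hs.2]⟩
  rw [← hγ.map_apply_eq_apply_sub_one (by linarith [hs.1]) (by linarith [hs.2])] at hNu
  rwa [← hinj (subset_closure hu) hcl hNu]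

theorem exists_extension (hγ : IsExtensionCurve N T γ) {δ : ℝ} (hδ : 0 < δ) (hδ₂ : 2 * δ ≤ 1)
    (hδT : 1 + δ ≤ T) {g : X → X} {U W : Set X} (hg : ContinuousOn g W)
    (hgN : RightInvOn g N W) (hNg : LeftInvOn g N U) (hW : MapsTo γ (Icc (T - 1 - δ) (T - 1 + δ)) W)
    (hU : MapsTo γ (Ico (T - δ) T) U) :
    ∃ γ' : ℝ → X, IsExtensionCurve N (T + δ) γ' ∧ EqOn γ' γ (Ico 0 T) := by
  set γ' : ℝ → X := fun t ↦ if t < T - δ then γ t else g (γ (t - 1))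
  have hEq : EqOn γ' γ (Ico 0 T) := by
    rintro t ⟨-, htT⟩
    by_cases h : t < T - δ
    · simp only [γ', if_pos h]
    · simp only [γ', if_neg h]
      rw [← hγ.map_apply_eq_apply_sub_one (by linarith) htT]
      exact hNg (hU ⟨not_lt.1 h, htT⟩)
  have hshift : MapsTo (· - 1) (Ioo (T - δ) (T + δ)) (Icc (T - 1 - δ) (T - 1 + δ)) :=
    fun t ht ↦ ⟨by linarith [ht.1], by linarith [ht.2]⟩
  have hnear : ContinuousOn γ' (Ioo (T - δ) (T + δ)) := by
    refine ContinuousOn.congr (f := g ∘ γ ∘ (· - 1)) ?_ fun t ht ↦ if_neg (not_lt.2 ht.1.le)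
    refine hg.comp ((hγ.continuousOn.mono fun s hs ↦ ⟨?_, ?_⟩).comp
      (continuous_sub_right 1).continuousOn hshift) (hW.comp hshift)
    · linarith [hs.1]
    · linarith [hs.2]
  refine ⟨γ', ⟨continuousOn_of_locally_continuousOn fun t ht ↦ ?_, fun t ht htT ↦ ?_⟩, hEq⟩
  · rcases lt_or_ge t T with htT | htT
    · refine ⟨Iio T, isOpen_Iio, htT, ?_⟩
      exact (hγ.continuousOn.congr hEq).mono fun s hs ↦ ⟨hs.1.1, hs.2⟩
    · exact ⟨Ioo (T - δ) (T + δ), isOpen_Ioo, ⟨by linarith, ht.2⟩, hnear.mono inter_subset_right⟩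
  · have hγt : γ' t = γ t := if_pos (by linarith)
    by_cases h : t + 1 < T - δ
    · simp only [γ', hγt, if_pos h]
      exact hγ.map_add_one t ht (by linarith)
    · simp only [γ', hγt, if_neg h, add_sub_cancel_right]
      exact hgN (hW ⟨by linarith, by linarith⟩)

end IsExtensionCurve

theorem extension_continues_beyond_general
    (N : ℂ → ℂ) (a : ℂ) (V : Set ℂ) (hV : V ∈ nhds a)
    (hNa : AnalyticAt ℂ N a) (hinj : InjOn N V)
    (T : ℝ) (hT : 1 < T)
    (γh : ℝ → ℂ) (hcont : ContinuousOn γh (Ico 0 T))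
    (hrel : ∀ t : ℝ, 0 ≤ t → t + 1 < T → N (γh (t + 1)) = γh t)
    (tseq : ℕ → ℝ) (htmem : ∀ n, tseq n ∈ Ico (0:ℝ) T)
    (htlim : Tendsto tseq atTop (nhds T))
    (hγlim : Tendsto (fun n => γh (tseq n)) atTop (nhds a)) :
    ∃ T' : ℝ, T < T' ∧ ∃ γh' : ℝ → ℂ, ContinuousOn γh' (Ico 0 T') ∧
      (∀ t ∈ Ico (0:ℝ) T, γh' t = γh t) ∧
      (∀ t : ℝ, 0 ≤ t → t + 1 < T' → N (γh' (t + 1)) = γh' t) := by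
  have hγ : IsExtensionCurve N T γh := ⟨hcont, hrel⟩
  obtain ⟨r, hr, hrK⟩ := nhds_basis_closedBall.mem_iff.1 <|
    inter_mem hV (hNa.eventually_analyticAt.mono fun _ hz ↦ hz.continuousAt)
  have hinjK : InjOn N (closedBall a r) := hinj.mono fun z hz ↦ (hrK hz).1
  have hleft : LeftInvOn (invFunOn N (closedBall a r)) N (closedBall a r) :=
    hinjK.leftInvOn_invFunOn
  have hg : ContinuousOn (invFunOn N (closedBall a r)) (N '' ball a r) :=
    ((isCompact_closedBall a r).continuousOn_image_of_leftInvOn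
      (fun z hz ↦ (hrK hz).2.continuousWithinAt) hleft).mono (image_mono ball_subset_closedBall)
  have hγT : γh (T - 1) = N a :=
    hγ.apply_sub_one_eq_of_tendsto hT hNa.continuousAt (fun n ↦ (htmem n).2) htlim hγlim
  have hW : N '' ball a r ∈ 𝓝 (γh (T - 1)) :=
    hγT ▸ hNa.nhds_le_map_nhds_of_injOn hV hinj (image_mem_map (ball_mem_nhds a hr))
  obtain ⟨δ, hδ, hδ₂, hδT, hδW⟩ := hγ.exists_mapsTo_Icc_sub_one hT hW
  obtain ⟨n, hnδ, hna⟩ := ((htlim.eventually (lt_mem_nhds (by linarith : T - δ < T))).and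
    (hγlim.eventually (ball_mem_nhds a hr))).exists
  have hball : MapsTo γh (Ico (T - δ) T) (ball a r) :=
    hγ.mapsTo_Ico_of_injOn_closure isOpen_ball (hinjK.mono closure_ball_subset_closedBall)
      (by linarith) le_rfl
      (hδW.mono (Ico_subset_Icc_self.trans (Icc_subset_Icc (by linarith) (by linarith))) le_rfl)
      ⟨tseq n, ⟨hnδ.le, (htmem n).2⟩, hna⟩
  obtain ⟨γ', hγ', hEq⟩ := hγ.exists_extension hδ hδ₂ hδT hg
    (hleft.rightInvOn_image.mono (image_mono ball_subset_closedBall))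
    (hleft.mono ball_subset_closedBall) hδW hball
  exact ⟨T + δ, by linarith, γ', hγ'.continuousOn, hEq, hγ'.map_add_one⟩

/-- If `N` is holomorphic and injective on a neighborhood `V` of `a ∈ ℂ`, and
`γ̂ : [0,T) → ℂ` is an extension curve (`N (γ̂ (t+1)) = γ̂ t`) with a sequence
`t n ↗ T` such that `γ̂ (t n) → a`, then the extension continues strictly beyond
`T`: `T` is not maximal. -/
theorem extension_continues_beyond
    (N : ℂ → ℂ) (a : ℂ) (V : Set ℂ) (hV : V ∈ nhds a)
    (hNa : AnalyticAt ℂ N a) (hinj : InjOn N V)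
    (T : ℝ) (hT : 1 < T)
    (γh : ℝ → ℂ) (hcont : ContinuousOn γh (Ico 0 T))
    (hrel : ∀ t : ℝ, 0 ≤ t → t + 1 < T → N (γh (t + 1)) = γh t)
    (tseq : ℕ → ℝ) (htmono : StrictMono tseq) (htmem : ∀ n, tseq n ∈ Ico (0:ℝ) T)
    (htlim : Tendsto tseq atTop (nhds T))
    (hγlim : Tendsto (fun n => γh (tseq n)) atTop (nhds a)) :
    ∃ T' : ℝ, T < T' ∧ ∃ γh' : ℝ → ℂ, ContinuousOn γh' (Ico 0 T') ∧
      (∀ t ∈ Ico (0:ℝ) T, γh' t = γh t) ∧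
      (∀ t : ℝ, 0 ≤ t → t + 1 < T' → N (γh' (t + 1)) = γh' t) :=
  extension_continues_beyond_general N a V hV hNa hinj T hT γh hcont hrel tseq htmem htlim hγlim
end

section
/- Let N be the Newton map of a nonconstant entire function f and U the immediate basin of a root ξ of f. If y₀ ∈ ∂U ∩ ℂ is a fixed point of N, then a contradiction ensues; i.e., N has no fixed points on the finite boundary of U. Equivalently: every fixed point of N in ℂ lies in the interior of its own basin of attraction and not on the boundary of any immediate basin. -/
open Filter Topology

/-!
Near a root `y` of order `k + 1` write `f w = (w - y)^(k+1) g w` with `g y ≠ 0`. Then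
`N w - y = (w - y) q w` with `q` continuous at `y` and `q y = k / (k + 1)`, so `N` contracts a
neighbourhood of `y` into itself and every root is an attracting fixed point of `N`.
If `y = ξ`, the basin of `ξ` is a neighbourhood of `ξ`, hence so is its connected component `U`
and `ξ ∈ interior U`. If `y ≠ ξ`, points near `y` converge to `y ≠ ξ`, so they avoid `U` and
`y ∉ closure U`.
-/

theorem eventually_tendsto_iterate_of_eventually_dist_le {X : Type*} [MetricSpace X]
    {T : X → X} {y : X} {c : ℝ} (hc₀ : 0 ≤ c) (hc₁ : c < 1)
    (hT : ∀ᶠ w in 𝓝 y, dist (T w) y ≤ c * dist w y) :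
    ∀ᶠ z in 𝓝 y, Tendsto (fun n => T^[n] z) atTop (𝓝 y) := by
  obtain ⟨r, hr, hball⟩ := Metric.eventually_nhds_iff_ball.mp hT
  filter_upwards [Metric.ball_mem_nhds y hr] with z hz
  have hiter : ∀ n, dist (T^[n] z) y ≤ c ^ n * dist z y := by
    intro n
    induction n with
    | zero => simp
    | succ n ih =>
      have hmem : T^[n] z ∈ Metric.ball y r :=
        (ih.trans (mul_le_of_le_one_left dist_nonneg (pow_le_one₀ hc₀ hc₁.le))).trans_lt hz
      calc dist (T^[n + 1] z) y ≤ c * dist (T^[n] z) y := by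
            rw [Function.iterate_succ_apply']; exact hball _ hmem
        _ ≤ c * (c ^ n * dist z y) := by gcongr
        _ = c ^ (n + 1) * dist z y := by ring
  refine tendsto_iff_dist_tendsto_zero.mpr (squeeze_zero (fun _ => dist_nonneg) hiter ?_)
  simpa using (tendsto_pow_atTop_nhds_zero_of_lt_one hc₀ hc₁).mul_const (dist z y)

theorem eventually_newton_sub_eq_mul {𝕜 : Type*} [NontriviallyNormedField 𝕜] {f g : 𝕜 → 𝕜}
    {y : 𝕜} {k : ℕ} (hfg : f =ᶠ[𝓝 y] fun w => (w - y) ^ (k + 1) * g w)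
    (hg : ∀ᶠ w in 𝓝 y, DifferentiableAt 𝕜 g w) :
    ∀ᶠ w in 𝓝 y, w - f w / deriv f w - y
      = (w - y) * (1 - g w / ((k + 1) * g w + (w - y) * deriv g w)) := by
  filter_upwards [hfg, hfg.deriv, hg] with w hfw hdfw hgw
  have hderiv : deriv f w = (w - y) ^ k * ((k + 1) * g w + (w - y) * deriv g w) := by
    have hpow : HasDerivAt (fun u => (u - y) ^ (k + 1)) ((k + 1) * (w - y) ^ k) w := by
      simpa using ((hasDerivAt_id w).sub_const y).fun_pow (k + 1)
    rw [hdfw, (hpow.fun_mul hgw.hasDerivAt).deriv]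
    ring
  -- where `deriv f w = 0` both sides read `w - y`, by the convention `x / 0 = 0`
  rcases eq_or_ne w y with rfl | hne
  · simp [hfw]
  · rw [hfw, hderiv, pow_succ, mul_assoc,
      mul_div_mul_left _ _ (pow_ne_zero k (sub_ne_zero.mpr hne))]
    ring

theorem exists_eventually_norm_newton_factor_le {g : ℂ → ℂ} {y : ℂ} (k : ℕ)
    (hg : AnalyticAt ℂ g y) (hgy : g y ≠ 0) :
    ∃ c, 0 ≤ c ∧ c < 1 ∧
      ∀ᶠ w in 𝓝 y, ‖1 - g w / ((k + 1) * g w + (w - y) * deriv g w)‖ ≤ c := by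
  set q : ℂ → ℂ := fun w => 1 - g w / ((k + 1) * g w + (w - y) * deriv g w)
  have hk : (k : ℂ) + 1 ≠ 0 := Nat.cast_add_one_ne_zero k
  have hqy : q y = ((k / (k + 1) : ℝ) : ℂ) := by
    simp only [q, sub_self, zero_mul, add_zero]
    push_cast
    field_simp
    ring
  have hqy_lt : ‖q y‖ < 1 := by
    rw [hqy, Complex.norm_real, Real.norm_of_nonneg (by positivity), div_lt_one (by positivity)]
    linarith
  have hq : ContinuousAt q y := by
    refine continuousAt_const.sub (hg.continuousAt.div ?_ (by simpa using mul_ne_zero hk hgy))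
    exact (continuousAt_const.mul hg.continuousAt).add
      ((continuousAt_id.sub continuousAt_const).mul hg.deriv.continuousAt)
  obtain ⟨c, hqc, hc₁⟩ := exists_between hqy_lt
  exact ⟨c, (norm_nonneg _).trans hqc.le, hc₁,
    (hq.norm.eventually_lt continuousAt_const hqc).mono fun _ h => h.le⟩

theorem exists_eventually_dist_newton_le_of_root {f : ℂ → ℂ} {y : ℂ} (hf : AnalyticAt ℂ f y)
    (hfy : f y = 0) (hord : analyticOrderAt f y ≠ ⊤) :
    ∃ c, 0 ≤ c ∧ c < 1 ∧ ∀ᶠ w in 𝓝 y, dist (w - f w / deriv f w) y ≤ c * dist w y := by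
  obtain ⟨m, hm⟩ := ENat.ne_top_iff_exists.mp hord
  have hm₀ : m ≠ 0 := by
    rintro rfl
    exact analyticOrderAt_ne_zero.mpr ⟨hf, hfy⟩ hm.symm
  obtain ⟨k, rfl⟩ := Nat.exists_eq_add_one_of_ne_zero hm₀
  obtain ⟨g, hg, hgy, hfg⟩ := hf.analyticOrderAt_eq_natCast.mp hm.symm
  obtain ⟨c, hc₀, hc₁, hq⟩ := exists_eventually_norm_newton_factor_le k hg hgy
  have hN := eventually_newton_sub_eq_mul (f := f) (k := k) hfg
    (hg.eventually_analyticAt.mono fun _ h => h.differentiableAt)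
  refine ⟨c, hc₀, hc₁, ?_⟩
  filter_upwards [hN, hq] with w hw hqw
  rw [dist_eq_norm, dist_eq_norm, hw, norm_mul, mul_comm]
  gcongr

theorem eventually_tendsto_newton_iterate_of_root {f : ℂ → ℂ} {y : ℂ}
    (hf : Differentiable ℂ f) (hf₀ : f ≠ 0) (hy : f y = 0) :
    ∀ᶠ z in 𝓝 y, Tendsto (fun n => (fun w => w - f w / deriv f w)^[n] z) atTop (𝓝 y) := by
  have hord : analyticOrderAt f y ≠ ⊤ :=
    (AnalyticOnNhd.analyticOrderAt_eq_top_iff_eq_zero y hf.analyticAt).not.mpr hf₀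
  obtain ⟨c, hc₀, hc₁, hN⟩ := exists_eventually_dist_newton_le_of_root (hf.analyticAt y) hy hord
  exact eventually_tendsto_iterate_of_eventually_dist_le hc₀ hc₁ hN

theorem no_fixed_point_on_boundary_of_basin_general
    (f : ℂ → ℂ) (hf : ∀ z, DifferentiableAt ℂ f z)
    (hnc : ¬ ∃ c : ℂ, ∀ z, f z = c)
    (N : ℂ → ℂ) (hN : N = fun z => z - f z / deriv f z)
    (ξ : ℂ)
    (U : Set ℂ)
    (hU : U = connectedComponentIn {z | Tendsto (fun n => N^[n] z) atTop (nhds ξ)} ξ) :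
    ∀ y : ℂ, f y = 0 → y ∉ frontier U := by
  intro y hy hyU
  subst hN hU
  have hf₀ : f ≠ 0 := fun h => hnc ⟨0, congrFun h⟩
  have hattr := eventually_tendsto_newton_iterate_of_root hf hf₀ hy
  rcases eq_or_ne y ξ with rfl | hne
  · exact hyU.2 (mem_interior_iff_mem_nhds.mpr (connectedComponentIn_mem_nhds hattr))
  · obtain ⟨z, hzU, hz⟩ := ((mem_closure_iff_frequently.mp hyU.1).and_eventually hattr).exists
    exact hne (tendsto_nhds_unique hz (connectedComponentIn_subset _ _ hzU))

/-- The Newton map `N_f = id - f/f'` of a nonconstant entire function has no fixed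
points on the finite boundary of the immediate basin `U` of a root `ξ`. Since the
fixed points of `N_f` in `ℂ` are precisely the roots of `f`, we state this as:
no root of `f` lies on `∂U`. -/
theorem no_fixed_point_on_boundary_of_basin
    (f : ℂ → ℂ) (hf : ∀ z, DifferentiableAt ℂ f z)
    (hnc : ¬ ∃ c : ℂ, ∀ z, f z = c)
    (N : ℂ → ℂ) (hN : N = fun z => z - f z / deriv f z)
    (ξ : ℂ) (hξ : f ξ = 0)
    (U : Set ℂ)
    (hU : U = connectedComponentIn {z | Tendsto (fun n => N^[n] z) atTop (nhds ξ)} ξ) :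
    ∀ y : ℂ, f y = 0 → y ∉ frontier U :=
  no_fixed_point_on_boundary_of_basin_general f hf hnc N hN ξ U hU
end
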